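/- arXiv:2401.06074 — 2 statements merged into one kernel-verified Lean document; each statement's English description precedes it below -/
import Mathlib

section
/- Let R be an F-finite Noetherian local domain of characteristic p which is F-pure (the Frobenius endomorphism is pure, equivalently splits as R-module map since R is F-finite), and suppose the inclusion R ⊆ R^ν into the normalization admits a factorization R → R^ν → R of some Frobenius power F^e : R → R. Then R = R^ν, i.e. R is normal. -/
/-- Let `R` be an F-finite Noetherian local domain of characteristic `p` which is F-pure
(since `R` is F-finite this means the Frobenius splits: there is `ψ` with
`ψ (a ^ p * b) = a * ψ b` and `ψ (x ^ p) = x`), and suppose the inclusion of `R` into its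
normalization `R^ν` (taken in the fraction field) admits a factorization
`R → R^ν → R` of some Frobenius power `F^e`. Then `R` is normal (integrally closed). -/
theorem stmt3 (p : ℕ) (hp : p.Prime) (R : Type*) [CommRing R] [IsDomain R]
    [IsLocalRing R] [IsNoetherianRing R] [CharP R p]
    (ψ : R →+ R) (hψ1 : ∀ a b : R, ψ (a ^ p * b) = a * ψ b) (hψ2 : ∀ x : R, ψ (x ^ p) = x)
    (e : ℕ) (he : 0 < e)
    (f : integralClosure R (FractionRing R) →+* R)
    (hf : ∀ r : R, f (algebraMap R (integralClosure R (FractionRing R)) r) = r ^ p ^ e) :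
    IsIntegrallyClosed R := by
  have hinj := IsFractionRing.injective R (FractionRing R)
  have key : ∀ y : FractionRing R, (∃ r : R, algebraMap R (FractionRing R) r = y ^ p) →
      ∃ r : R, algebraMap R (FractionRing R) r = y := by
    rintro y ⟨r, hr⟩
    obtain ⟨⟨a, b⟩, hab⟩ := IsLocalization.surj (nonZeroDivisors R) y
    have hbne : (b : R) ≠ 0 := nonZeroDivisors.coe_ne_zero b
    have hb0 : algebraMap R (FractionRing R) b ≠ 0 := fun h =>
      hbne (hinj (by rw [h, map_zero]))
    have h1 : algebraMap R (FractionRing R) (a ^ p)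
        = algebraMap R (FractionRing R) ((b : R) ^ p * r) := by
      rw [map_pow, ← hab, mul_pow, map_mul, map_pow, hr]; ring
    have h2 : a ^ p = (b : R) ^ p * r := hinj h1
    have h3 : a = (b : R) * ψ r := by rw [← hψ2 a, h2, hψ1]
    refine ⟨ψ r, ?_⟩
    have hab' : y * algebraMap R (FractionRing R) b
        = algebraMap R (FractionRing R) (ψ r) * algebraMap R (FractionRing R) b := by
      rw [hab, h3, map_mul, mul_comm]
    exact (mul_right_cancel₀ hb0 hab').symm
  have pow : ∀ n : ℕ, ∀ y : FractionRing R,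
      (∃ r : R, algebraMap R (FractionRing R) r = y ^ p ^ n) →
      ∃ r : R, algebraMap R (FractionRing R) r = y := by
    intro n
    induction n with
    | zero => rintro y ⟨r, hr⟩; exact ⟨r, by simpa using hr⟩
    | succ n ih =>
      rintro y ⟨r, hr⟩
      obtain ⟨r', hr'⟩ := key (y ^ p ^ n) ⟨r, by rw [hr, ← pow_mul, pow_succ]⟩
      exact ih y ⟨r', hr'⟩
  rw [isIntegrallyClosed_iff (FractionRing R)]
  intro x hx
  apply pow e
  set z : integralClosure R (FractionRing R) := ⟨x, hx⟩ with hzdef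
  obtain ⟨⟨a, b⟩, hab⟩ := IsLocalization.surj (nonZeroDivisors R) x
  have hbne : (b : R) ≠ 0 := nonZeroDivisors.coe_ne_zero b
  have hb0 : algebraMap R (FractionRing R) b ≠ 0 := fun h =>
    hbne (hinj (by rw [h, map_zero]))
  have hz : z * algebraMap R (integralClosure R (FractionRing R)) b
      = algebraMap R (integralClosure R (FractionRing R)) a := by
    apply Subtype.ext
    simpa using hab
  have h4 : f z * (b : R) ^ p ^ e = a ^ p ^ e := by
    rw [← hf (b : R), ← map_mul, hz, hf]
  refine ⟨f z, ?_⟩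
  have h5 : algebraMap R (FractionRing R) (f z) * (algebraMap R (FractionRing R) b) ^ p ^ e
      = x ^ p ^ e * (algebraMap R (FractionRing R) b) ^ p ^ e := by
    rw [← map_pow, ← map_mul, h4, map_pow, ← hab, mul_pow, map_pow]
  exact mul_right_cancel₀ (pow_ne_zero _ hb0) h5
end

section
/- Let X be an integral proper scheme over an F-finite field k of characteristic p satisfying (S_2) and (G_1), D an AC divisor on X, and Δ an effective AC Z_(p)-divisor. Then S(X, Δ; O_X(D)) := ⊕_{m ≥ 0} S^0(X, Δ; O_X(mD)) is an ideal of the section ring R(X, O_X(D)) = ⊕_{m ≥ 0} H^0(X, O_X(mD)); consequently, if S^0(X, Δ; O_X(nD)) ≠ 0 for some n > 0, then the Frobenius stable Kodaira dimension κ_S(X, Δ; D) equals the Kodaira dimension κ(X, D). -/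
/-- The Frobenius-stable sections `S⁰(X, Δ; O_X(m D))`: the stable images of the trace
maps `T e m : H⁰(X, (1 - p^e)(K_X + Δ) + p^e m D) → H⁰(X, m D)` for `e ≫ 0`. Here the
spaces of sections are modelled inside the total section algebra `R`, with
`B e m ⊆ R` the source space of `T e m` and the image taken for all large `e`. -/
def stableSections {R : Type*} [CommRing R] (T : ℕ → ℕ → R →+ R)
    (B : ℕ → ℕ → AddSubgroup R) (m : ℕ) : Set R :=
  {x | ∃ e₀ : ℕ, ∀ e ≥ e₀, ∃ y ∈ B e m, T e m y = x}

/-- Lemma 3.1.3: let `X` be an integral proper scheme over an F-finite field of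
characteristic `p` satisfying `(S_2)` and `(G_1)`, `D` an AC divisor and `Δ` an effective
AC `ℤ_(p)`-divisor. Then `S(X, Δ; O_X(D)) = ⊕_m S⁰(X, Δ; O_X(m D))` is an ideal of the
section ring `R(X, O_X(D)) = ⊕_m H⁰(X, O_X(m D))`; consequently, if
`S⁰(X, Δ; O_X(n D)) ≠ 0` for some `n > 0`, then `κ_S(X, Δ; D) = κ(X, D)`.

Model: `R` is the (integral, of characteristic `p`) total section algebra, graded with
pieces `A m = H⁰(X, O_X(m D))` (`hA` is the grading), `B e m` and `T e m` are the source
spaces and the twisted trace maps defining `S⁰`, satisfying `T e m (B e m) ⊆ A m` and the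
projection-formula compatibility `T e (m + m') (t^{p^e} x) = t · T e m x` for
`t ∈ A m'`, `x ∈ B e m`. Conclusions: the stable sections form an ideal, and if
`x₀ ∈ S⁰(n D)` is nonzero then multiplication by `x₀` embeds `A m = H⁰(m D)` into
`S⁰((n + m) D)` (so the growth of `dim S⁰(m D)` equals that of `dim H⁰(m D)`, i.e.
`κ_S(X, Δ; D) = κ(X, D)`). -/
theorem stmt19 (p : ℕ) (hp : p.Prime) {R : Type*} [CommRing R] [IsDomain R] [CharP R p]
    (A : ℕ → AddSubgroup R) (B : ℕ → ℕ → AddSubgroup R) (T : ℕ → ℕ → R →+ R)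
    (hA : ∀ (m m' : ℕ) (x y : R), x ∈ A m → y ∈ A m' → x * y ∈ A (m + m'))
    (hTmem : ∀ (e m : ℕ), ∀ y ∈ B e m, T e m y ∈ A m)
    (hBmul : ∀ (e m m' : ℕ) (t x : R), t ∈ A m' → x ∈ B e m →
      t ^ p ^ e * x ∈ B e (m + m'))
    (hproj : ∀ (e m m' : ℕ) (t x : R), t ∈ A m' → x ∈ B e m →
      T e (m + m') (t ^ p ^ e * x) = t * T e m x) :
    (∀ (m m' : ℕ) (x t : R), x ∈ stableSections T B m → t ∈ A m' →
      t * x ∈ stableSections T B (m + m')) ∧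
    (∀ n : ℕ, 0 < n → ∀ x₀ ∈ stableSections T B n, x₀ ≠ 0 → ∀ m : ℕ,
      (∀ a ∈ A m, x₀ * a ∈ stableSections T B (n + m)) ∧
      Set.InjOn (fun a : R => x₀ * a) (A m)) := by
  have ideal : ∀ (m m' : ℕ) (x t : R), x ∈ stableSections T B m → t ∈ A m' →
      t * x ∈ stableSections T B (m + m') := by
    intro m m' x t hx ht
    obtain ⟨e₀, hx⟩ := hx
    refine ⟨e₀, fun e he => ?_⟩
    obtain ⟨y, hy, hTy⟩ := hx e he
    exact ⟨t ^ p ^ e * y, hBmul e m m' t y ht hy, by rw [hproj e m m' t y ht hy, hTy]⟩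
  refine ⟨ideal, fun n _ x₀ hx₀ hx₀ne m => ⟨fun a ha => ?_, ?_⟩⟩
  · have := ideal n m x₀ a hx₀ ha
    rwa [mul_comm] at this
  · intro a _ b _ hab
    exact mul_left_cancel₀ hx₀ne hab
end
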